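/- On Z = ℝ⁴ \ {0}, the Poisson brackets of the Kepler integrals of motion satisfy {M₁₂, A₁} = -A₂, {M₁₂, A₂} = A₁, and {A₁, A₂} = 2 H M₁₂, where H = p²/2 - 1/r, M₁₂ = q₁p₂ - q₂p₁, Aᵢ = qᵢp² - pᵢ(p,q) - qᵢ/r. -/

import Mathlib

noncomputable section

/-- Partial derivative of `f : ℝ⁴ → ℝ` in the `i`-th coordinate direction.
Coordinates: `(q₁,q₂,p₁,p₂) = (z 0, z 1, z 2, z 3)`. -/
def pd (f : (Fin 4 → ℝ) → ℝ) (i : Fin 4) (z : Fin 4 → ℝ) : ℝ :=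
  fderiv ℝ f z (Pi.single i 1)

/-- Canonical Poisson bracket `{f,g} = Σᵢ (∂f/∂pᵢ ∂g/∂qᵢ - ∂f/∂qᵢ ∂g/∂pᵢ)`. -/
def pb (f g : (Fin 4 → ℝ) → ℝ) (z : Fin 4 → ℝ) : ℝ :=
  pd f 2 z * pd g 0 z - pd f 0 z * pd g 2 z
  + pd f 3 z * pd g 1 z - pd f 1 z * pd g 3 z

/-- `p² = p₁² + p₂²`. -/
def psq (z : Fin 4 → ℝ) : ℝ := (z 2)^2 + (z 3)^2

/-- `(p,q) = p₁q₁ + p₂q₂`. -/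
def pdotq (z : Fin 4 → ℝ) : ℝ := z 2 * z 0 + z 3 * z 1

/-- `r = √(q₁² + q₂²)`. -/
def rr (z : Fin 4 → ℝ) : ℝ := Real.sqrt ((z 0)^2 + (z 1)^2)

/-- The Kepler Hamiltonian `H = p²/2 - 1/r`. -/
def keplerH (z : Fin 4 → ℝ) : ℝ := psq z / 2 - 1 / rr z

/-- Angular momentum `M₁₂ = q₁p₂ - q₂p₁`. -/
def angM (z : Fin 4 → ℝ) : ℝ := z 0 * z 3 - z 1 * z 2

/-- First Runge–Lenz component `A₁ = q₁p² - p₁(p,q) - q₁/r`. -/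
def rlA1 (z : Fin 4 → ℝ) : ℝ := z 0 * psq z - z 2 * pdotq z - z 0 / rr z

/-- Second Runge–Lenz component `A₂ = q₂p² - p₂(p,q) - q₂/r`. -/
def rlA2 (z : Fin 4 → ℝ) : ℝ := z 1 * psq z - z 3 * pdotq z - z 1 / rr z

end

/-!
Where `q ≠ 0` all four functions are smooth, and `A₁ = p₂ M₁₂ - q₁/r`, `A₂ = -p₁ M₁₂ - q₂/r`; the
brackets then follow from the explicit gradients together with `r² = q₁² + q₂²`.
On the plane `q = 0` the terms `qᵢ/r` are not even continuous (`q₁/r` is `t/|t|` along the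
`q₁`-axis, with `0/0 = 0`), so `fderiv` takes its junk value `0` on `A₁`, `A₂`; there both sides of
each identity vanish, since `A₁ = A₂ = M₁₂ = 0` at such points.
-/

noncomputable def grad (f : (Fin 4 → ℝ) → ℝ) (z : Fin 4 → ℝ) : Fin 4 → ℝ := fun i => pd f i z

lemma pb_eq_grad (f g : (Fin 4 → ℝ) → ℝ) (z : Fin 4 → ℝ) :
    pb f g z = grad f z 2 * grad g z 0 - grad f z 0 * grad g z 2
      + grad f z 3 * grad g z 1 - grad f z 1 * grad g z 3 := rfl

lemma grad_eq_of_hasFDerivAt {f : (Fin 4 → ℝ) → ℝ} {f' : (Fin 4 → ℝ) →L[ℝ] ℝ} {z : Fin 4 → ℝ}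
    (h : HasFDerivAt f f' z) : grad f z = fun i => f' (Pi.single i 1) := by
  funext i; rw [grad, pd, h.fderiv]

lemma grad_eq_zero_of_not_differentiableAt {f : (Fin 4 → ℝ) → ℝ} {z : Fin 4 → ℝ}
    (h : ¬ DifferentiableAt ℝ f z) : grad f z = 0 := by
  funext i; simp [grad, pd, fderiv_zero_of_not_differentiableAt h]

noncomputable abbrev dcoord (i : Fin 4) : (Fin 4 → ℝ) →L[ℝ] ℝ := ContinuousLinearMap.proj i

lemma hasFDerivAt_coord (i : Fin 4) (z : Fin 4 → ℝ) :
    HasFDerivAt (fun w : Fin 4 → ℝ => w i) (dcoord i) z :=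
  hasFDerivAt_apply i z

lemma hasFDerivAt_angM (z : Fin 4 → ℝ) :
    HasFDerivAt angM (z 3 • dcoord 0 - z 2 • dcoord 1 - z 1 • dcoord 2 + z 0 • dcoord 3) z := by
  have h : HasFDerivAt angM _ z := ((hasFDerivAt_coord 0 z).mul (hasFDerivAt_coord 3 z)).sub
    ((hasFDerivAt_coord 1 z).mul (hasFDerivAt_coord 2 z))
  exact h.congr_fderiv (by ext v; simp; ring)

lemma rr_pos {z : Fin 4 → ℝ} (hq : z 0 ^ 2 + z 1 ^ 2 ≠ 0) : 0 < rr z :=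
  Real.sqrt_pos.2 (lt_of_le_of_ne (by positivity) hq.symm)

lemma hasFDerivAt_rr {z : Fin 4 → ℝ} (hq : z 0 ^ 2 + z 1 ^ 2 ≠ 0) :
    HasFDerivAt rr ((rr z)⁻¹ • (z 0 • dcoord 0 + z 1 • dcoord 1)) z := by
  have h : HasFDerivAt rr _ z :=
    (((hasFDerivAt_coord 0 z).pow 2).add ((hasFDerivAt_coord 1 z).pow 2)).sqrt hq
  have hr0 := (rr_pos hq).ne'
  exact h.congr_fderiv (by ext v; simp; field_simp; exact mul_comm _ _)

lemma rlA1_eq : rlA1 = fun w => w 3 * angM w - w 0 * (rr w)⁻¹ := by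
  funext w; simp only [rlA1, angM, psq, pdotq]; ring

lemma rlA2_eq : rlA2 = fun w => -(w 2 * angM w) - w 1 * (rr w)⁻¹ := by
  funext w; simp only [rlA2, angM, psq, pdotq]; ring

lemma grad_angM (z : Fin 4 → ℝ) : grad angM z = ![z 3, -z 2, -z 1, z 0] := by
  rw [grad_eq_of_hasFDerivAt (hasFDerivAt_angM z)]
  ext i; fin_cases i <;> simp

lemma grad_rlA1 {z : Fin 4 → ℝ} (hq : z 0 ^ 2 + z 1 ^ 2 ≠ 0) :
    grad rlA1 z = ![z 3 ^ 2 - 1 / rr z + z 0 ^ 2 / rr z ^ 3, -(z 2 * z 3) + z 0 * z 1 / rr z ^ 3,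
      -(z 1 * z 3), 2 * z 0 * z 3 - z 1 * z 2] := by
  have hr0 := (rr_pos hq).ne'
  have h : HasFDerivAt (fun w => w 3 * angM w - w 0 * (rr w)⁻¹) _ z :=
    ((hasFDerivAt_coord 3 z).mul (hasFDerivAt_angM z)).sub
      ((hasFDerivAt_coord 0 z).mul ((hasDerivAt_inv hr0).comp_hasFDerivAt z (hasFDerivAt_rr hq)))
  rw [rlA1_eq, grad_eq_of_hasFDerivAt h]
  ext i; fin_cases i <;> simp [angM] <;> field_simp <;> ring

lemma grad_rlA2 {z : Fin 4 → ℝ} (hq : z 0 ^ 2 + z 1 ^ 2 ≠ 0) :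
    grad rlA2 z = ![-(z 2 * z 3) + z 0 * z 1 / rr z ^ 3, z 2 ^ 2 - 1 / rr z + z 1 ^ 2 / rr z ^ 3,
      2 * z 1 * z 2 - z 0 * z 3, -(z 0 * z 2)] := by
  have hr0 := (rr_pos hq).ne'
  have h : HasFDerivAt (fun w => -(w 2 * angM w) - w 1 * (rr w)⁻¹) _ z :=
    ((hasFDerivAt_coord 2 z).mul (hasFDerivAt_angM z)).neg.sub
      ((hasFDerivAt_coord 1 z).mul ((hasDerivAt_inv hr0).comp_hasFDerivAt z (hasFDerivAt_rr hq)))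
  rw [rlA2_eq, grad_eq_of_hasFDerivAt h]
  ext i; fin_cases i <;> simp [angM] <;> field_simp <;> ring

lemma kepler_brackets_of_q_ne_zero {z : Fin 4 → ℝ} (hq : z 0 ^ 2 + z 1 ^ 2 ≠ 0) :
    pb angM rlA1 z = -rlA2 z ∧ pb angM rlA2 z = rlA1 z ∧
      pb rlA1 rlA2 z = 2 * keplerH z * angM z := by
  have hr0 := (rr_pos hq).ne'
  have hr2 : rr z ^ 2 = z 0 ^ 2 + z 1 ^ 2 := Real.sq_sqrt (by positivity)
  simp only [pb_eq_grad, grad_angM, grad_rlA1 hq, grad_rlA2 hq, Fin.isValue, Matrix.cons_val,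
    Matrix.cons_val_zero, Matrix.cons_val_one]
  refine ⟨by simp only [rlA2, psq, pdotq]; ring, by simp only [rlA1, psq, pdotq]; ring, ?_⟩
  simp only [keplerH, angM, psq]
  field_simp
  linear_combination (z 1 * z 2 - z 0 * z 3) * hr2

open Filter Topology in
lemma not_continuousAt_div_abs : ¬ ContinuousAt (fun t : ℝ => t / |t|) 0 := by
  intro h
  have h1 : Tendsto (fun t : ℝ => t / |t|) (𝓝[>] 0) (𝓝 1) :=
    tendsto_const_nhds.congr' <| eventually_nhdsWithin_of_forall fun t (ht : 0 < t) => by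
      simp [abs_of_pos ht, ht.ne']
  simpa using tendsto_nhds_unique (h.tendsto.mono_left nhdsWithin_le_nhds) h1

lemma rr_add_smul_single {z : Fin 4 → ℝ} (h0 : z 0 = 0) (h1 : z 1 = 0) {i : Fin 4}
    (hi : i = 0 ∨ i = 1) (t : ℝ) : rr (z + t • Pi.single i 1) = |t| := by
  rcases hi with rfl | rfl <;> simp [rr, h0, h1, Real.sqrt_sq_eq_abs]

lemma not_differentiableAt_coord_mul_inv_rr {z : Fin 4 → ℝ} (h0 : z 0 = 0) (h1 : z 1 = 0)
    {i : Fin 4} (hi : i = 0 ∨ i = 1) : ¬ DifferentiableAt ℝ (fun w => w i * (rr w)⁻¹) z := by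
  intro h
  have hzi : z i = 0 := by rcases hi with rfl | rfl <;> assumption
  have hline : ContinuousAt (fun t : ℝ => z + t • Pi.single i 1) 0 := by fun_prop
  have := h.continuousAt.comp_of_eq hline (by simp)
  refine not_continuousAt_div_abs (this.congr (Filter.Eventually.of_forall fun t => ?_))
  simp [rr_add_smul_single h0 h1 hi, hzi, div_eq_mul_inv]

lemma not_differentiableAt_rlA1 {z : Fin 4 → ℝ} (h0 : z 0 = 0) (h1 : z 1 = 0) :
    ¬ DifferentiableAt ℝ rlA1 z := by
  intro h
  refine not_differentiableAt_coord_mul_inv_rr h0 h1 (Or.inl rfl) ?_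
  have hM : DifferentiableAt ℝ (fun w => w 3 * angM w) z :=
    ((hasFDerivAt_coord 3 z).mul (hasFDerivAt_angM z)).differentiableAt
  simpa [rlA1_eq] using hM.fun_sub h

lemma not_differentiableAt_rlA2 {z : Fin 4 → ℝ} (h0 : z 0 = 0) (h1 : z 1 = 0) :
    ¬ DifferentiableAt ℝ rlA2 z := by
  intro h
  refine not_differentiableAt_coord_mul_inv_rr h0 h1 (Or.inr rfl) ?_
  have hM : DifferentiableAt ℝ (fun w => -(w 2 * angM w)) z :=
    ((hasFDerivAt_coord 2 z).mul (hasFDerivAt_angM z)).neg.differentiableAt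
  simpa [rlA2_eq] using hM.fun_sub h

lemma kepler_brackets_of_q_eq_zero {z : Fin 4 → ℝ} (h0 : z 0 = 0) (h1 : z 1 = 0) :
    pb angM rlA1 z = -rlA2 z ∧ pb angM rlA2 z = rlA1 z ∧
      pb rlA1 rlA2 z = 2 * keplerH z * angM z := by
  have hA1 := grad_eq_zero_of_not_differentiableAt (not_differentiableAt_rlA1 h0 h1)
  have hA2 := grad_eq_zero_of_not_differentiableAt (not_differentiableAt_rlA2 h0 h1)
  simp [pb_eq_grad, hA1, hA2, rlA1, rlA2, angM, pdotq, h0, h1]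

theorem kepler_integrals_poisson_brackets :
    ∀ z : Fin 4 → ℝ, z ≠ 0 →
      pb angM rlA1 z = -rlA2 z ∧
      pb angM rlA2 z = rlA1 z ∧
      pb rlA1 rlA2 z = 2 * keplerH z * angM z := by
  intro z _
  by_cases hq : z 0 ^ 2 + z 1 ^ 2 = 0
  · obtain ⟨h0, h1⟩ : z 0 = 0 ∧ z 1 = 0 := by constructor <;> nlinarith
    exact kepler_brackets_of_q_eq_zero h0 h1
  · exact kepler_brackets_of_q_ne_zero hq
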